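/- Let n ≥ k ≥ 2 and let S be a nonempty extremal family of k-element subsets of [n], and let a be the k-binomial decomposition of |S|. Then for every x ∈ [n], the degree satisfies |S(x)| ≤ B(a−1, k−1). -/

import Mathlib

/-- Generalized binomial coefficient `C(n, j)`:
`C(n,j) = n(n-1)⋯(n-j+1)/j!` for `j ≥ 0` and `C(n,j) = 0` for `j < 0`. -/
def C (n j : ℤ) : ℤ :=
  if 0 ≤ j then
    if 0 ≤ n then ((n.toNat.choose j.toNat : ℕ) : ℤ)
    else (-1) ^ j.toNat * (((j - n - 1).toNat.choose j.toNat : ℕ) : ℤ)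
  else 0

/-- `B a k = Σ_l C(a_l, k - l)`. -/
def B : List ℤ → ℤ → ℤ
  | [], _ => 0
  | x :: xs, k => C x k + B xs (k - 1)

/-- `a` has the shape of a `k`-binomial decomposition: strictly decreasing,
length at most `k`, and `a_i ≥ k - i` for every index. -/
def IsKBinomSeq (k : ℕ) (a : List ℤ) : Prop :=
  a.Chain' (· > ·) ∧ a.length ≤ k ∧ ∀ i < a.length, (k : ℤ) - i ≤ a.getD i 0

/-- `a` is the `k`-binomial decomposition of `m`. -/
def IsKBinom (k : ℕ) (m : ℤ) (a : List ℤ) : Prop :=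
  IsKBinomSeq k a ∧ m = B a (k : ℤ)

/-- Non-strict lexicographic order on integer sequences. -/
def lexLE (x y : List ℤ) : Prop := x = y ∨ List.Lex (· < ·) x y

/-- A family `T` of `j`-element sets is extremal if `|Δ(T)| = B(d, j-1)`
where `d` is the `j`-binomial decomposition of `|T|`. -/
def IsExtremal {α : Type} [DecidableEq α] (j : ℕ) (T : Finset (Finset α)) : Prop :=
  ∃ d : List ℤ, IsKBinom j (T.card : ℤ) d ∧ ((Finset.shadow T).card : ℤ) = B d ((j : ℤ) - 1)

/-!
The sets of `S` through `x`, with `x` removed, form the link `L`, a `(k-1)`-uniform family with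
`|L| = |S(x)|`. Both `L` and `{insert x U | U ∈ ∂L}` lie in `∂S` and they are disjoint, so
`|L| + |∂L| ≤ |∂S|`. By extremality and uniqueness of the binomial decomposition,
`|∂S| = B(a, k-1)`, which is `B(a-1, k-1) + B(a-1, k-2)` by Pascal's rule. If `|L|` exceeded
`B(a-1, k-1)`, the numerical Kruskal–Katona theorem, obtained by comparing `L` with the colex
initial segment `cascade (a-1)` of that size, would give `|∂L| ≥ B(a-1, k-2)`: a contradiction.
-/

open Finset Finset.Colex
open scoped FinsetFamily

section Binomial

lemma C_of_neg {x j : ℤ} (hj : j < 0) : C x j = 0 := by simp [C, not_le.mpr hj]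

lemma C_of_nonneg {x j : ℤ} (hx : 0 ≤ x) (hj : 0 ≤ j) :
    C x j = (x.toNat.choose j.toNat : ℤ) := by simp [C, hj, hx]

lemma C_natCast (x j : ℕ) : C x j = x.choose j := by
  rw [C_of_nonneg (by positivity) (by positivity)]; simp

lemma C_nonneg {x j : ℤ} (hx : 0 ≤ x) : 0 ≤ C x j := by
  unfold C; split_ifs <;> positivity

lemma C_pos {x j : ℤ} (hj : 0 ≤ j) (hjx : j ≤ x) : 0 < C x j := by
  rw [C_of_nonneg (hj.trans hjx) hj]
  exact_mod_cast Nat.choose_pos (by omega)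

lemma C_mono {x y j : ℤ} (hj : 0 ≤ j) (hx : 0 ≤ x) (hxy : x ≤ y) : C x j ≤ C y j := by
  rw [C_of_nonneg hx hj, C_of_nonneg (hx.trans hxy) hj]
  exact_mod_cast Nat.choose_le_choose _ (by omega)

lemma C_add_one {x : ℤ} (hx : 0 ≤ x) (j : ℤ) : C (x + 1) j = C x j + C x (j - 1) := by
  rcases lt_trichotomy j 0 with hj | rfl | hj
  · rw [C_of_neg hj, C_of_neg hj, C_of_neg (by omega)]; ring
  · rw [C_of_nonneg (by omega) le_rfl, C_of_nonneg hx le_rfl, C_of_neg (by omega)]; simp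
  · obtain ⟨x, rfl⟩ := Int.eq_ofNat_of_zero_le hx
    obtain ⟨j, rfl⟩ : ∃ j' : ℕ, j = j' + 1 := ⟨(j - 1).toNat, by omega⟩
    rw [add_sub_cancel_right, ← Nat.cast_succ, ← Nat.cast_succ, C_natCast, C_natCast, C_natCast,
      Nat.choose_succ_succ', Nat.cast_add, add_comm]

@[simp] lemma B_nil (j : ℤ) : B [] j = 0 := rfl

@[simp] lemma B_cons_natCast_succ (y : ℤ) (ys : List ℤ) (k : ℕ) :
    B (y :: ys) ((k + 1 : ℕ) : ℤ) = C y (k + 1) + B ys k := by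
  simp [B]

lemma B_of_neg : ∀ {l : List ℤ} {j : ℤ}, j < 0 → B l j = 0
  | [], _, _ => rfl
  | _ :: _, _, hj => by rw [B, C_of_neg hj, B_of_neg (by omega), add_zero]

lemma B_nonneg : ∀ {l : List ℤ} {j : ℤ}, (∀ y ∈ l, 0 ≤ y) → 0 ≤ B l j
  | [], _, _ => le_rfl
  | y :: _, j, h => by
    rw [B]
    have := C_nonneg (j := j) (h y List.mem_cons_self)
    have := B_nonneg (j := j - 1) fun z hz => h z (List.mem_cons_of_mem _ hz)
    omega

lemma B_pascal : ∀ {l : List ℤ} {j : ℤ}, (∀ y ∈ l, 1 ≤ y) →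
    B l j = B (l.map (· - 1)) j + B (l.map (· - 1)) (j - 1)
  | [], _, _ => rfl
  | y :: _, j, h => by
    have hy : C y j = C (y - 1) j + C (y - 1) (j - 1) := by
      simpa using C_add_one (x := y - 1) (by linarith [h y List.mem_cons_self]) j
    rw [List.map_cons, B, B, B, hy, B_pascal fun z hz => h z (List.mem_cons_of_mem _ hz)]
    ring

end Binomial

section Decomposition

variable {k : ℕ} {y : ℤ} {ys a d : List ℤ}

lemma IsKBinomSeq.pos_of_cons (h : IsKBinomSeq k (y :: ys)) : 0 < k := by
  have := h.2.1; simp only [List.length_cons] at this; omega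

lemma isKBinomSeq_succ_cons :
    IsKBinomSeq (k + 1) (y :: ys) ↔ (k + 1 ≤ y ∧ ∀ z ∈ ys, z < y) ∧ IsKBinomSeq k ys := by
  show (y :: ys).IsChain (· > ·) ∧ _ ↔ _ ∧ ys.IsChain (· > ·) ∧ _
  simp only [List.isChain_iff_pairwise, List.pairwise_cons,
    List.length_cons, Nat.forall_lt_succ_left, List.getD_cons_zero, List.getD_cons_succ]
  push_cast
  constructor
  · rintro ⟨⟨hlt, hp⟩, hlen, h0, hi⟩
    exact ⟨⟨by simpa using h0, hlt⟩, hp, by omega, fun i hi' => by linarith [hi i hi']⟩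
  · rintro ⟨⟨h0, hlt⟩, hp, hlen, hi⟩
    exact ⟨⟨hlt, hp⟩, by omega, by simpa using h0, fun i hi' => by linarith [hi i hi']⟩

lemma isKBinomSeq_nil (k : ℕ) : IsKBinomSeq k [] := ⟨.nil, by simp, by simp⟩

lemma IsKBinomSeq.pairwise (h : IsKBinomSeq k a) : a.Pairwise (· > ·) :=
  List.isChain_iff_pairwise.1 h.1

lemma IsKBinomSeq.le_add_getElem (h : IsKBinomSeq k a) (i : ℕ) (hi : i < a.length) :
    (k : ℤ) ≤ i + a[i] := by
  have := h.2.2 i hi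
  rw [List.getD_eq_getElem _ _ hi] at this
  omega

lemma IsKBinomSeq.one_le (h : IsKBinomSeq k a) : ∀ z ∈ a, 1 ≤ z := by
  induction a generalizing k with
  | nil => simp
  | cons y ys ih =>
    obtain ⟨k, rfl⟩ := Nat.exists_eq_add_one.2 h.pos_of_cons
    obtain ⟨⟨hy, -⟩, hys⟩ := isKBinomSeq_succ_cons.1 h
    simp only [List.mem_cons, forall_eq_or_imp]
    exact ⟨by omega, ih hys⟩

lemma IsKBinomSeq.B_nonneg (h : IsKBinomSeq k a) (j : ℤ) : 0 ≤ B a j :=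
  _root_.B_nonneg fun z hz => by linarith [h.one_le z hz]

lemma IsKBinomSeq.B_pos (h : IsKBinomSeq k (y :: ys)) : 0 < B (y :: ys) k := by
  obtain ⟨k, rfl⟩ := Nat.exists_eq_add_one.2 h.pos_of_cons
  obtain ⟨⟨hy, -⟩, hys⟩ := isKBinomSeq_succ_cons.1 h
  rw [B_cons_natCast_succ]
  have := C_pos (by omega) hy
  have := hys.B_nonneg k
  omega

lemma IsKBinomSeq.C_head_le_B (h : IsKBinomSeq k (y :: ys)) : C y k ≤ B (y :: ys) k := by
  obtain ⟨k, rfl⟩ := Nat.exists_eq_add_one.2 h.pos_of_cons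
  rw [B_cons_natCast_succ]
  have := (isKBinomSeq_succ_cons.1 h).2.B_nonneg k
  push_cast
  omega

lemma IsKBinomSeq.B_lt_C {x : ℤ} (h : IsKBinomSeq k a) (hlt : ∀ z ∈ a, z < x) (hkx : k ≤ x) :
    B a k < C x k := by
  induction a generalizing k x with
  | nil => exact C_pos (by positivity) hkx
  | cons y ys ih =>
    obtain ⟨k, rfl⟩ := Nat.exists_eq_add_one.2 h.pos_of_cons
    obtain ⟨⟨hy, hys⟩, htail⟩ := isKBinomSeq_succ_cons.1 h
    have hyx : y + 1 ≤ x := hlt y List.mem_cons_self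
    calc B (y :: ys) ((k + 1 : ℕ) : ℤ) = C y (k + 1) + B ys k := B_cons_natCast_succ ..
      _ < C y (k + 1) + C y k := by linarith [ih htail hys (by omega)]
      _ = C (y + 1) (k + 1) := by rw [C_add_one (by omega), add_sub_cancel_right]
      _ ≤ C x (k + 1) := C_mono (by omega) (by omega) hyx
      _ = C x ((k + 1 : ℕ) : ℤ) := by push_cast; rfl

lemma IsKBinomSeq.B_lt_C_head_add_one (h : IsKBinomSeq k (y :: ys)) :
    B (y :: ys) k < C (y + 1) k := by
  obtain ⟨k, rfl⟩ := Nat.exists_eq_add_one.2 h.pos_of_cons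
  obtain ⟨⟨hy, hys⟩, -⟩ := isKBinomSeq_succ_cons.1 h
  refine h.B_lt_C ?_ (by push_cast; omega)
  simp only [List.mem_cons, forall_eq_or_imp]
  exact ⟨by omega, fun z hz => (hys z hz).trans (by omega)⟩

lemma IsKBinomSeq.head_le_of_B_le {x : ℤ} {xs : List ℤ} (hx : IsKBinomSeq k (x :: xs))
    (hy : IsKBinomSeq k (y :: ys)) (h : B (x :: xs) k ≤ B (y :: ys) k) : x ≤ y := by
  by_contra! hyx
  have := C_mono (j := k) (by positivity) (by linarith [hy.one_le y List.mem_cons_self])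
    (Int.add_one_le_of_lt hyx)
  linarith [hx.C_head_le_B, hy.B_lt_C_head_add_one]

lemma IsKBinomSeq.eq_of_B_eq (ha : IsKBinomSeq k a) (hd : IsKBinomSeq k d)
    (h : B a k = B d k) : a = d := by
  induction a generalizing k d with
  | nil =>
    cases d with
    | nil => rfl
    | cons y ys => exact absurd h hd.B_pos.ne
  | cons x xs ih =>
    cases d with
    | nil => exact absurd h ha.B_pos.ne'
    | cons y ys =>
      obtain rfl := (ha.head_le_of_B_le hd h.le).antisymm (hd.head_le_of_B_le ha h.ge)
      obtain ⟨k, rfl⟩ := Nat.exists_eq_add_one.2 ha.pos_of_cons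
      rw [B_cons_natCast_succ, B_cons_natCast_succ, add_right_inj] at h
      rw [ih (isKBinomSeq_succ_cons.1 ha).2 (isKBinomSeq_succ_cons.1 hd).2 h]

lemma IsKBinomSeq.le_of_B_le_C {m : ℕ} (h : IsKBinomSeq k a) (hkm : k ≤ m) (hB : B a k ≤ C m k) :
    ∀ z ∈ a, z ≤ m := by
  cases a with
  | nil => simp
  | cons y ys =>
    obtain ⟨k, rfl⟩ := Nat.exists_eq_add_one.2 h.pos_of_cons
    have hm : IsKBinomSeq (k + 1) [(m : ℤ)] :=
      isKBinomSeq_succ_cons.2 ⟨⟨by omega, by simp⟩, isKBinomSeq_nil k⟩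
    have hym : y ≤ m := h.head_le_of_B_le hm (by simpa [B] using hB)
    simp only [List.mem_cons, forall_eq_or_imp]
    exact ⟨hym, fun z hz => ((isKBinomSeq_succ_cons.1 h).1.2 z hz).le.trans hym⟩

end Decomposition

section Link

variable {α : Type*} [DecidableEq α] {S : Finset (Finset α)} {x : α} {r : ℕ}

def link (S : Finset (Finset α)) (x : α) : Finset (Finset α) :=
  (S.filter (x ∈ ·)).image (·.erase x)

lemma card_link : #(link S x) = #(S.filter (x ∈ ·)) := by
  refine card_image_of_injOn fun X hX Y hY hXY => ?_
  rw [← insert_erase (mem_filter.1 hX).2, ← insert_erase (mem_filter.1 hY).2]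
  exact congrArg (insert x) hXY

lemma Set.Sized.link (hS : (S : Set (Finset α)).Sized (r + 1)) :
    (link S x : Set (Finset α)).Sized r := by
  intro A hA
  obtain ⟨X, hX, rfl⟩ := Finset.mem_image.1 hA
  rw [mem_filter] at hX
  rw [card_erase_of_mem hX.2, hS hX.1, add_tsub_cancel_right]

lemma notMem_of_mem_shadow_link {A : Finset α} (hA : A ∈ ∂ (link S x)) : x ∉ A := by
  obtain ⟨Y, hY, hAY⟩ := exists_subset_of_mem_shadow hA
  obtain ⟨X, -, rfl⟩ := mem_image.1 hY
  exact fun hx => notMem_erase x X (hAY hx)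

lemma link_subset_shadow : link S x ⊆ ∂ S := by
  intro A hA
  obtain ⟨X, hX, rfl⟩ := mem_image.1 hA
  rw [mem_filter] at hX
  exact erase_mem_shadow hX.1 hX.2

lemma image_insert_shadow_link_subset_shadow : (∂ (link S x)).image (insert x) ⊆ ∂ S := by
  intro A hA
  obtain ⟨U, hU, rfl⟩ := mem_image.1 hA
  obtain ⟨y, hyU, hyU'⟩ := mem_shadow_iff_insert_mem.1 hU
  obtain ⟨X, hX, hXU⟩ := mem_image.1 hyU'
  rw [mem_filter] at hX
  have hyx : y ≠ x := by
    rintro rfl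
    exact notMem_erase y X (hXU ▸ mem_insert_self y U)
  refine mem_shadow_iff_insert_mem.2 ⟨y, ?_, ?_⟩
  · simp [hyx, hyU]
  · rw [insert_comm, ← hXU, insert_erase hX.2]
    exact hX.1

lemma card_link_add_card_shadow_link_le : #(link S x) + #(∂ (link S x)) ≤ #(∂ S) := by
  have hdisj : Disjoint (link S x) ((∂ (link S x)).image (insert x)) := by
    refine disjoint_left.2 fun A hA hA' => ?_
    obtain ⟨X, -, rfl⟩ := mem_image.1 hA
    obtain ⟨U, -, hU⟩ := mem_image.1 hA'
    exact notMem_erase x X (hU ▸ mem_insert_self x U)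
  have hinj : #((∂ (link S x)).image (insert x)) = #(∂ (link S x)) :=
    card_image_of_injOn fun U hU V hV hUV => by
      rw [← erase_insert (notMem_of_mem_shadow_link hU), ← erase_insert
        (notMem_of_mem_shadow_link hV)]
      exact congrArg (·.erase x) hUV
  rw [← hinj, ← card_union_of_disjoint hdisj]
  exact card_le_card (union_subset link_subset_shadow image_insert_shadow_link_subset_shadow)

end Link

lemma powersetCard_subset_shadow_powersetCard {α : Type*} [DecidableEq α] {u : Finset α} {r : ℕ}
    (hr : r + 1 ≤ #u) : powersetCard r u ⊆ ∂ (powersetCard (r + 1) u) := by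
  intro A hA
  rw [mem_powersetCard] at hA
  obtain ⟨z, hzu, hzA⟩ := exists_mem_notMem_of_card_lt_card (hA.2.trans_lt hr)
  refine mem_shadow_iff_insert_mem.2 ⟨z, hzA, mem_powersetCard.2 ⟨insert_subset hzu hA.1, ?_⟩⟩
  rw [card_insert_of_notMem hzA, hA.2]

section Cascade

variable {n : ℕ}

def cascade : List (Fin n) → ℕ → Finset (Finset (Fin n))
  | [], _ => ∅
  | _ :: _, 0 => {∅}
  | y :: ys, r + 1 => powersetCard (r + 1) (Iio y) ∪ (cascade ys r).image (insert y)

lemma exists_ge_of_mem_cascade :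
    ∀ {b : List (Fin n)} {r : ℕ} {A : Finset (Fin n)}, A ∈ cascade b r → ∀ z ∈ A, ∃ e ∈ b, z ≤ e
  | [], _, _, hA => by simp [cascade] at hA
  | _ :: _, 0, _, hA => by simp_all [cascade]
  | y :: ys, r + 1, A, hA => by
    rw [cascade, mem_union] at hA
    rcases hA with hA | hA
    · exact fun z hz => ⟨y, List.mem_cons_self, (mem_Iio.1 ((mem_powersetCard.1 hA).1 hz)).le⟩
    · obtain ⟨A', hA', rfl⟩ := mem_image.1 hA
      intro z hz
      rcases mem_insert.1 hz with rfl | hz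
      · exact ⟨z, List.mem_cons_self, le_rfl⟩
      · obtain ⟨e, he, hze⟩ := exists_ge_of_mem_cascade hA' z hz
        exact ⟨e, List.mem_cons_of_mem _ he, hze⟩

variable {y : Fin n} {ys b : List (Fin n)} {r : ℕ} {A : Finset (Fin n)}

lemma lt_of_mem_cascade_tail (hb : (y :: ys).Pairwise (· > ·)) (hA : A ∈ cascade ys r) :
    ∀ z ∈ A, z < y := fun z hz => by
  obtain ⟨e, he, hze⟩ := exists_ge_of_mem_cascade hA z hz
  exact hze.trans_lt (List.rel_of_pairwise_cons hb he)

lemma notMem_of_mem_cascade_tail (hb : (y :: ys).Pairwise (· > ·)) (hA : A ∈ cascade ys r) :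
    y ∉ A :=
  fun hy => lt_irrefl y (lt_of_mem_cascade_tail hb hA y hy)

lemma sized_cascade (hb : b.Pairwise (· > ·)) : (cascade b r : Set (Finset (Fin n))).Sized r := by
  induction b generalizing r with
  | nil => simp [cascade]
  | cons y ys ih =>
    cases r with
    | zero => simp [cascade]
    | succ r =>
      intro A hA
      rw [mem_coe, cascade, mem_union] at hA
      rcases hA with hA | hA
      · exact (mem_powersetCard.1 hA).2
      · obtain ⟨A', hA', rfl⟩ := mem_image.1 hA
        rw [card_insert_of_notMem (notMem_of_mem_cascade_tail hb hA'), ih hb.of_cons hA']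

lemma card_cascade (hb : b.Pairwise (· > ·)) :
    (#(cascade b r) : ℤ) = B (b.map fun i : Fin n => (i : ℤ)) r := by
  induction b generalizing r with
  | nil => simp [cascade]
  | cons y ys ih =>
    cases r with
    | zero => simp [cascade, B, B_of_neg, C]
    | succ r =>
      have hdisj : Disjoint (powersetCard (r + 1) (Iio y)) ((cascade ys r).image (insert y)) :=
        disjoint_left.2 fun A hA hA' => by
          obtain ⟨A', -, rfl⟩ := mem_image.1 hA'
          exact lt_irrefl y (mem_Iio.1 ((mem_powersetCard.1 hA).1 (mem_insert_self y A')))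
      have hinj : #((cascade ys r).image (insert y)) = #(cascade ys r) :=
        card_image_of_injOn fun A hA A' hA' hAA' => by
          rw [← erase_insert (notMem_of_mem_cascade_tail hb hA),
            ← erase_insert (notMem_of_mem_cascade_tail hb hA'), hAA']
      rw [cascade, card_union_of_disjoint hdisj, hinj, card_powersetCard, Fin.card_Iio,
        List.map_cons, B_cons_natCast_succ, ← ih hb.of_cons, ← Nat.cast_succ, C_natCast]
      push_cast; ring

lemma mem_cascade_of_toColex_lt (hb : b.Pairwise (· > ·)) :
    ∀ {r : ℕ} {s t : Finset (Fin n)}, s ∈ cascade b r → toColex t < toColex s → #t = r →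
      t ∈ cascade b r := by
  induction b with
  | nil => simp [cascade]
  | cons y ys ih =>
    intro r s t hs hlt hcard
    cases r with
    | zero =>
      rw [cascade, mem_singleton] at hs
      subst hs
      exact absurd hlt (by simp)
    | succ r =>
      rw [cascade, mem_union, mem_image] at hs ⊢
      obtain hs | ⟨s', hs', rfl⟩ := hs
      · refine .inl (mem_powersetCard.2 ⟨fun z hz => mem_Iio.2 ?_, hcard⟩)
        exact Colex.forall_lt_mono hlt.le (fun z hz => mem_Iio.1 ((mem_powersetCard.1 hs).1 hz)) z hz
      have hys' := notMem_of_mem_cascade_tail hb hs'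
      by_cases hyt : y ∈ t
      · refine .inr ⟨t.erase y, ih hb.of_cons hs' ?_ ?_, insert_erase hyt⟩
        · rw [← sdiff_singleton_eq_erase, ← erase_insert hys', ← sdiff_singleton_eq_erase]
          exact (Colex.toColex_sdiff_lt_toColex_sdiff (singleton_subset_iff.2 hyt)
            (singleton_subset_iff.2 (mem_insert_self _ _))).2 hlt
        · rw [card_erase_of_mem hyt, hcard, add_tsub_cancel_right]
      · have hle : ∀ z ∈ t, z ≤ y := Colex.forall_le_mono hlt.le <| by
          simpa using fun z hz => (lt_of_mem_cascade_tail hb hs' z hz).le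
        refine .inl (mem_powersetCard.2 ⟨fun z hz => mem_Iio.2 ?_, hcard⟩)
        exact (hle z hz).lt_of_ne (by rintro rfl; exact hyt hz)

lemma isInitSeg_cascade (hb : b.Pairwise (· > ·)) {r : ℕ} : IsInitSeg (cascade b r) r :=
  ⟨sized_cascade hb, fun _ _ hs ht => mem_cascade_of_toColex_lt hb hs ht.1 ht.2⟩

lemma cascade_subset_shadow (hb : b.Pairwise (· > ·)) :
    ∀ {s : ℕ}, (∀ i (h : i < b.length), s + 1 ≤ i + b[i]) →
      cascade b s ⊆ ∂ (cascade b (s + 1)) := by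
  induction b with
  | nil => simp [cascade]
  | cons y ys ih =>
    intro s hbs
    have hy : s + 1 ≤ #(Iio y) := by
      have := hbs 0 (by simp)
      rw [List.getElem_cons_zero] at this
      simpa using this
    have hhead := powersetCard_subset_shadow_powersetCard hy
    cases s with
    | zero =>
      rw [cascade, cascade, ← powersetCard_zero (Iio y)]
      exact hhead.trans (shadow_mono subset_union_left)
    | succ s =>
      rw [cascade, cascade]
      refine union_subset (hhead.trans (shadow_mono subset_union_left)) ?_
      intro A hA
      obtain ⟨A', hA', rfl⟩ := mem_image.1 hA
      have htail := ih hb.of_cons (fun i hi => by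
        have := hbs (i + 1) (by simpa using hi)
        rw [List.getElem_cons_succ] at this
        omega) hA'
      obtain ⟨z, hzA', hzY⟩ := mem_shadow_iff_insert_mem.1 htail
      have hzy : z ≠ y := (lt_of_mem_cascade_tail hb hzY z (mem_insert_self z A')).ne
      refine mem_shadow_iff_insert_mem.2 ⟨z, by simp [hzy, hzA'], ?_⟩
      rw [insert_comm]
      exact mem_union_right _ (mem_image_of_mem _ hzY)

end Cascade

theorem kruskal_katona_B {n r : ℕ} {T : Finset (Finset (Fin n))}
    (hT : (T : Set (Finset (Fin n))).Sized r) {l : List ℤ} (hl : l.Pairwise (· > ·))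
    (hlr : ∀ i (h : i < l.length), (r : ℤ) ≤ i + l[i]) (hln : ∀ y ∈ l, 0 ≤ y ∧ y < n)
    (hcard : B l r ≤ #T) : B l (r - 1) ≤ #(∂ T) := by
  cases r with
  | zero => rw [B_of_neg (by norm_num)]; positivity
  | succ s =>
    lift l to List ℕ using fun y hy => (hln y hy).1
    lift l to List (Fin n) using fun y hy => by exact_mod_cast (hln y (List.mem_map_of_mem hy)).2
    simp only [List.map_map, Function.comp_def] at *
    have hb : l.Pairwise (· > ·) := by
      rw [List.pairwise_map] at hl
      exact hl.imp fun h => by simpa using h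
    have hbs : ∀ i (h : i < l.length), s + 1 ≤ i + l[i] := fun i hi => by
      have := hlr i (by simpa using hi)
      simp only [List.getElem_map] at this
      omega
    have hle : #(cascade l (s + 1)) ≤ #T := by
      have := card_cascade hb (r := s + 1)
      omega
    have hkk := Finset.kruskal_katona hT hle (isInitSeg_cascade hb)
    have hsub := card_le_card (cascade_subset_shadow hb hbs)
    have := card_cascade hb (r := s)
    push_cast at this ⊢
    rw [add_sub_cancel_right]
    omega

theorem IsKBinomSeq.kruskal_katona_B_map_sub_one {n r : ℕ} {a : List ℤ}
    {T : Finset (Finset (Fin n))} (h : IsKBinomSeq (r + 1) a) (han : ∀ z ∈ a, z ≤ n) (hT : (T : Set (Finset (Fin n))).Sized r)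
    (hB : B (a.map (· - 1)) r ≤ #T) : B (a.map (· - 1)) (r - 1) ≤ #(∂ T) := by
  refine kruskal_katona_B hT (h.pairwise.map _ fun _ _ => by omega) (fun i hi => ?_) ?_ hB
  · have := h.le_add_getElem i (by simpa using hi)
    simp only [List.getElem_map]
    push_cast at this
    omega
  · simp only [List.mem_map]
    rintro _ ⟨z, hz, rfl⟩
    exact ⟨by linarith [h.one_le z hz], by linarith [han z hz]⟩

theorem extremal_degree_bound_general
    (n k : ℕ)
    (S : Finset (Finset (Fin n))) (hScard : ∀ X ∈ S, X.card = k)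
    (hext : IsExtremal k S)
    (a : List ℤ) (ha : IsKBinom k (S.card : ℤ) a)
    (x : Fin n) :
    ((S.filter (fun X => x ∈ X)).card : ℤ) ≤ B (a.map (· - 1)) ((k : ℤ) - 1) := by
  obtain ⟨ha, hSa⟩ := ha
  obtain ⟨d, ⟨hd, hSd⟩, hshadow⟩ := hext
  rw [hd.eq_of_B_eq ha (hSd.symm.trans hSa)] at hshadow
  rcases a with _ | ⟨y, ys⟩
  · rw [B_nil, Nat.cast_eq_zero, card_eq_zero] at hSa
    simp [hSa]
  obtain ⟨r, rfl⟩ := Nat.exists_eq_add_one.2 ha.pos_of_cons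
  obtain ⟨X, hX⟩ : S.Nonempty := card_pos.1 (by exact_mod_cast hSa ▸ ha.B_pos)
  have hrn : r + 1 ≤ n := by simpa [hScard X hX] using card_le_univ X
  have hSn : B (y :: ys) ((r + 1 : ℕ) : ℤ) ≤ C n (r + 1 : ℕ) := by
    rw [← hSa, C_natCast]
    exact_mod_cast (Fintype.card_fin n ▸ Set.Sized.card_le hScard)
  have hlink := card_link_add_card_shadow_link_le (S := S) (x := x)
  have hKK := ha.kruskal_katona_B_map_sub_one (ha.le_of_B_le_C hrn hSn)
    (Set.Sized.link (x := x) hScard)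
  rw [card_link] at hlink hKK
  have hpascal := B_pascal ha.one_le (j := r)
  push_cast at hshadow hKK ⊢
  rw [add_sub_cancel_right] at hshadow ⊢
  by_contra! hlt
  linarith [hKK hlt.le]

/-- Degree bound in an extremal family: `|S(x)| ≤ B(a-1, k-1)` for every `x`. -/
theorem extremal_degree_bound
    (n k : ℕ) (hk : 2 ≤ k) (hkn : k ≤ n)
    (S : Finset (Finset (Fin n))) (hS : S.Nonempty) (hScard : ∀ X ∈ S, X.card = k)
    (hext : IsExtremal k S)
    (a : List ℤ) (ha : IsKBinom k (S.card : ℤ) a)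
    (x : Fin n) :
    ((S.filter (fun X => x ∈ X)).card : ℤ) ≤ B (a.map (· - 1)) ((k : ℤ) - 1) :=
  extremal_degree_bound_general n k S hScard hext a ha x
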